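/- arXiv:2303.12133 — 5 statements merged into one kernel-verified Lean document; each statement's English description precedes it below -/
import Mathlib

section
/- For a symmetric positive definite n×n real matrix X, the minimizer over positive definite matrices of the function X ↦ Tr[HX] + β⁻¹Tr[X log X − X], where H is a fixed symmetric matrix and β > 0, is X = exp(−βH), and the minimum value is −β⁻¹ Tr[exp(−βH)]. -/
/-!
Put `G = exp(-βH)`, so that `log G = -βH` and
`f X = β⁻¹ D(X‖G) - β⁻¹ Tr G` with `D(X‖Y) = Tr[X log X - X log Y - X + Y]`.
Klein's inequality `D(X‖Y) ≥ 0` follows by expanding in eigenbases `(uᵢ, xᵢ)` of `X` and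
`(vⱼ, yⱼ)` of `Y`: `D(X‖Y) = ∑ᵢⱼ ⟨uᵢ, vⱼ⟩² (xᵢ log xᵢ - xᵢ log yⱼ - xᵢ + yⱼ)`, each bracket
being nonnegative by `log t ≤ t - 1`. If `D(X‖Y) = 0`, then `xᵢ = yⱼ` whenever `⟨uᵢ, vⱼ⟩ ≠ 0`,
which forces `X = Y`.
-/

open Matrix

/-- Matrix logarithm of a Hermitian matrix, via the continuous functional calculus
(junk value `0` on non-Hermitian matrices). -/
noncomputable def matLog {n : ℕ} (A : Matrix (Fin n) (Fin n) ℝ) : Matrix (Fin n) (Fin n) ℝ :=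
  if h : A.IsHermitian then h.cfc Real.log else 0

namespace Real

variable {x y : ℝ}

lemma mul_log_sub_mul_log_sub_add_nonneg (hx : 0 < x) (hy : 0 < y) :
    0 ≤ x * log x - x * log y - x + y := by
  have h := mul_le_mul_of_nonneg_left (log_le_sub_one_of_pos (div_pos hy hx)) hx.le
  rw [log_div hy.ne' hx.ne', mul_sub_one, mul_div_cancel₀ _ hx.ne'] at h
  linarith

lemma mul_log_sub_mul_log_sub_add_pos (hx : 0 < x) (hy : 0 < y) (hxy : x ≠ y) :
    0 < x * log x - x * log y - x + y := by
  have hyx : y / x ≠ 1 := fun h => hxy ((div_eq_one_iff_eq hx.ne').1 h).symm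
  have h := mul_lt_mul_of_pos_left (log_lt_sub_one_of_pos (div_pos hy hx) hyx) hx
  rw [log_div hy.ne' hx.ne', mul_sub_one, mul_div_cancel₀ _ hx.ne'] at h
  linarith

end Real

namespace Matrix.IsHermitian

variable {ι : Type*} [Fintype ι] [DecidableEq ι] {A B : Matrix ι ι ℝ}

noncomputable def eigenOverlap (hA : A.IsHermitian) (hB : B.IsHermitian) : Matrix ι ι ℝ :=
  star (hA.eigenvectorUnitary : Matrix ι ι ℝ) * hB.eigenvectorUnitary

lemma cfc_eq_conj_diagonal (hA : A.IsHermitian) (f : ℝ → ℝ) :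
    hA.cfc f = hA.eigenvectorUnitary * diagonal (f ∘ hA.eigenvalues) *
      star (hA.eigenvectorUnitary : Matrix ι ι ℝ) :=
  rfl

lemma cfc_id_eq (hA : A.IsHermitian) : hA.cfc id = A := by
  rw [← hA.cfc_eq]; exact cfc_id' ..

lemma cfc_one_eq (hA : A.IsHermitian) : hA.cfc 1 = 1 := by
  rw [← hA.cfc_eq]; exact cfc_const_one ..

lemma posDef_cfc (hA : A.IsHermitian) {f : ℝ → ℝ} (hf : ∀ i, 0 < f (hA.eigenvalues i)) :
    (hA.cfc f).PosDef := by
  rw [cfc_eq_conj_diagonal, IsUnit.posDef_star_right_conjugate_iff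
    Unitary.isUnit_coe, posDef_diagonal_iff]
  exact hf

lemma trace_cfc_mul_cfc (hA : A.IsHermitian) (hB : B.IsHermitian) (f g : ℝ → ℝ) :
    (hA.cfc f * hB.cfc g).trace =
      ∑ i, ∑ j, eigenOverlap hA hB i j ^ 2 * (f (hA.eigenvalues i) * g (hB.eigenvalues j)) := by
  calc (hA.cfc f * hB.cfc g).trace
      = (diagonal (f ∘ hA.eigenvalues) * eigenOverlap hA hB * diagonal (g ∘ hB.eigenvalues) *
          star (eigenOverlap hA hB)).trace := by
        rw [cfc_eq_conj_diagonal, cfc_eq_conj_diagonal, mul_assoc, mul_assoc, trace_mul_comm]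
        simp only [eigenOverlap, star_mul, star_star, Matrix.mul_assoc]
    _ = _ := by
        simp only [trace, diag_apply, mul_apply (N := star _), mul_diagonal, diagonal_mul,
          star_apply, star_trivial, Function.comp_apply]
        refine Finset.sum_congr rfl fun i _ => Finset.sum_congr rfl fun j _ => by ring

lemma eq_of_eigenvalues_eq_of_eigenOverlap_ne_zero (hA : A.IsHermitian) (hB : B.IsHermitian)
    (h : ∀ i j, eigenOverlap hA hB i j ≠ 0 → hA.eigenvalues i = hB.eigenvalues j) : A = B := by
  have hcomm : diagonal hA.eigenvalues * eigenOverlap hA hB =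
      eigenOverlap hA hB * diagonal hB.eigenvalues := by
    ext i j
    rw [diagonal_mul, mul_diagonal]
    by_cases hij : eigenOverlap hA hB i j = 0
    · simp only [hij, mul_zero, zero_mul]
    · rw [h i j hij, mul_comm]
  calc A = hA.cfc id := hA.cfc_id_eq.symm
    _ = hA.eigenvectorUnitary * (diagonal hA.eigenvalues * eigenOverlap hA hB) *
          star (hB.eigenvectorUnitary : Matrix ι ι ℝ) := by
        simp [cfc_eq_conj_diagonal, eigenOverlap, Matrix.mul_assoc]
    _ = hA.eigenvectorUnitary * (eigenOverlap hA hB * diagonal hB.eigenvalues) *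
          star (hB.eigenvectorUnitary : Matrix ι ι ℝ) := by rw [hcomm]
    _ = hB.cfc id := by simp [cfc_eq_conj_diagonal, eigenOverlap, ← Matrix.mul_assoc]
    _ = B := hB.cfc_id_eq

end Matrix.IsHermitian

section RelativeEntropy

open Real Matrix.IsHermitian

variable {n : ℕ} {X Y : Matrix (Fin n) (Fin n) ℝ}

lemma matLog_eq_cfc (hX : X.IsHermitian) : matLog X = hX.cfc log := dif_pos hX

lemma mul_matLog_eq_cfc (hX : X.IsHermitian) :
    X * matLog X = hX.cfc fun t => t * log t := by
  rw [matLog_eq_cfc hX, ← hX.cfc_eq, ← hX.cfc_eq,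
    cfc_mul (fun t => t) log X (X.finite_real_spectrum.continuousOn _)
      (X.finite_real_spectrum.continuousOn _), cfc_id' ..]

lemma exp_eq_cfc {M : Matrix (Fin n) (Fin n) ℝ} (hM : M.IsHermitian) :
    NormedSpace.exp M = hM.cfc exp := by
  -- `NormedSpace.exp` sees only the topology, which any matrix norm induces.
  let := Matrix.linftyOpNormedRing (α := ℝ) (n := Fin n)
  let := Matrix.linftyOpNormedAlgebra (α := ℝ) (n := Fin n) (R := ℝ)
  rw [← hM.cfc_eq]
  exact (@CFC.real_exp_eq_normedSpace_exp _ _ _ _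
    IsHermitian.instContinuousFunctionalCalculus M hM).symm

lemma matLog_exp {M : Matrix (Fin n) (Fin n) ℝ} (hM : M.IsHermitian) :
    matLog (NormedSpace.exp M) = M := by
  rw [matLog_eq_cfc hM.exp, ← hM.exp.cfc_eq, exp_eq_cfc hM, ← hM.cfc_eq,
    ← cfc_comp log exp M hM.isSelfAdjoint ((Set.toFinite _).continuousOn _)
    ((Set.toFinite _).continuousOn _)]
  simp only [Function.comp_def, log_exp]
  exact cfc_id' ℝ M hM.isSelfAdjoint

lemma posDef_exp {M : Matrix (Fin n) (Fin n) ℝ} (hM : M.IsHermitian) :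
    (NormedSpace.exp M).PosDef := by
  rw [exp_eq_cfc hM]
  exact hM.posDef_cfc fun i => exp_pos _

noncomputable def relEntropy (X Y : Matrix (Fin n) (Fin n) ℝ) : ℝ :=
  (X * matLog X - X * matLog Y - X + Y).trace

@[simp]
lemma relEntropy_self (X : Matrix (Fin n) (Fin n) ℝ) : relEntropy X X = 0 := by
  simp [relEntropy]

lemma relEntropy_eq_sum (hX : X.IsHermitian) (hY : Y.IsHermitian) :
    relEntropy X Y = ∑ i, ∑ j, eigenOverlap hX hY i j ^ 2 *
      (hX.eigenvalues i * log (hX.eigenvalues i) - hX.eigenvalues i * log (hY.eigenvalues j)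
        - hX.eigenvalues i + hY.eigenvalues j) := by
  have hXlogX := trace_cfc_mul_cfc hX hY (fun t => t * log t) 1
  have hXlogY := trace_cfc_mul_cfc hX hY id log
  have hTrX := trace_cfc_mul_cfc hX hY id 1
  have hTrY := trace_cfc_mul_cfc hX hY 1 id
  rw [← mul_matLog_eq_cfc, cfc_one_eq, mul_one] at hXlogX
  rw [cfc_id_eq, ← matLog_eq_cfc] at hXlogY
  rw [cfc_id_eq, cfc_one_eq, mul_one] at hTrX
  rw [cfc_id_eq, cfc_one_eq, one_mul] at hTrY
  rw [relEntropy, trace_add, trace_sub, trace_sub, hXlogX, hXlogY, hTrX, hTrY,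
    ← Finset.sum_sub_distrib, ← Finset.sum_sub_distrib, ← Finset.sum_add_distrib]
  refine Finset.sum_congr rfl fun i _ => ?_
  rw [← Finset.sum_sub_distrib, ← Finset.sum_sub_distrib, ← Finset.sum_add_distrib]
  refine Finset.sum_congr rfl fun j _ => ?_
  simp only [id_eq, Pi.one_apply]
  ring

lemma relEntropy_nonneg (hX : X.PosDef) (hY : Y.PosDef) : 0 ≤ relEntropy X Y := by
  rw [relEntropy_eq_sum hX.1 hY.1]
  exact Finset.sum_nonneg fun i _ => Finset.sum_nonneg fun j _ => mul_nonneg (sq_nonneg _)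
    (mul_log_sub_mul_log_sub_add_nonneg (hX.eigenvalues_pos i) (hY.eigenvalues_pos j))

lemma relEntropy_pos (hX : X.PosDef) (hY : Y.PosDef) (hXY : X ≠ Y) : 0 < relEntropy X Y := by
  obtain ⟨i, j, hij, hxy⟩ : ∃ i j, hX.1.eigenOverlap hY.1 i j ≠ 0 ∧
      hX.1.eigenvalues i ≠ hY.1.eigenvalues j := by
    by_contra! h
    exact hXY (hX.1.eq_of_eigenvalues_eq_of_eigenOverlap_ne_zero hY.1 h)
  have hterm i j := mul_nonneg (sq_nonneg (hX.1.eigenOverlap hY.1 i j))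
    (mul_log_sub_mul_log_sub_add_nonneg (hX.eigenvalues_pos i) (hY.eigenvalues_pos j))
  rw [relEntropy_eq_sum hX.1 hY.1]
  refine Finset.sum_pos' (fun i _ => Finset.sum_nonneg fun j _ => hterm i j)
    ⟨i, Finset.mem_univ _, Finset.sum_pos' (fun j _ => hterm i j) ⟨j, Finset.mem_univ _, ?_⟩⟩
  exact mul_pos (sq_pos_of_ne_zero hij)
    (mul_log_sub_mul_log_sub_add_pos (hX.eigenvalues_pos i) (hY.eigenvalues_pos j) hxy)

end RelativeEntropy

/-- The minimizer over symmetric positive definite matrices of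
`X ↦ Tr[HX] + β⁻¹ Tr[X log X − X]` is `X = exp(−βH)`, with minimum value
`−β⁻¹ Tr[exp(−βH)]`. -/
theorem entropic_min {n : ℕ} (H : Matrix (Fin n) (Fin n) ℝ) (hH : H.IsHermitian)
    (β : ℝ) (hβ : 0 < β)
    (f : Matrix (Fin n) (Fin n) ℝ → ℝ)
    (hf : ∀ X, f X = (H * X).trace + β⁻¹ * (X * matLog X - X).trace) :
    f (NormedSpace.exp ((-β) • H)) = -β⁻¹ * (NormedSpace.exp ((-β) • H)).trace ∧
    ∀ X : Matrix (Fin n) (Fin n) ℝ, X.PosDef →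
      (-β⁻¹ * (NormedSpace.exp ((-β) • H)).trace ≤ f X ∧
        (X ≠ NormedSpace.exp ((-β) • H) →
          -β⁻¹ * (NormedSpace.exp ((-β) • H)).trace < f X)) := by
  have hβH : ((-β) • H).IsHermitian := hH.smul (IsSelfAdjoint.all _)
  set G := NormedSpace.exp ((-β) • H)
  have hf_eq : ∀ X, f X = β⁻¹ * relEntropy X G - β⁻¹ * G.trace := fun X => by
    rw [hf, relEntropy, matLog_exp hβH, Matrix.mul_smul, trace_add, trace_sub, trace_sub,
      trace_sub, trace_smul, smul_eq_mul, trace_mul_comm X H]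
    field_simp
    ring
  refine ⟨by rw [hf_eq, relEntropy_self]; ring, fun X hX => ⟨?_, fun hXG => ?_⟩⟩
  · have := mul_nonneg (inv_nonneg.2 hβ.le) (relEntropy_nonneg hX (posDef_exp hβH))
    linarith [hf_eq X]
  · have := mul_pos (inv_pos.2 hβ) (relEntropy_pos hX (posDef_exp hβH) hXG)
    linarith [hf_eq X]
end

section
/- For a symmetric matrix H and β > 0, the minimizer over symmetric matrices X with 0 ≺ X ≺ I of Tr[HX] + β⁻¹(Tr[X log X] + Tr[(I−X) log(I−X)]) is X = (I + exp(βH))⁻¹, and the minimum value is −β⁻¹ Tr[log(I + exp(−βH))]. -/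
open Matrix

/-!
Write `H = U diag(μ) Uᵀ` and `X = V diag(x) Vᵀ` with `U`, `V` orthogonal, and `P = Uᵀ V`. The
squares `Pᵢⱼ²` form a doubly stochastic matrix, and `Tr[HX] = ∑ᵢⱼ Pᵢⱼ² μᵢ xⱼ`,
`S_bin(X) = ∑ⱼ s(xⱼ) = ∑ᵢⱼ Pᵢⱼ² s(xⱼ)` for `s(x) = x log x + (1 − x) log(1 − x)`, so the
functional equals `∑ᵢⱼ Pᵢⱼ² φ(μᵢ, xⱼ)` with `φ(h, x) = h x + β⁻¹ s(x)`. For each `h`, `φ(h, x)`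
exceeds `−β⁻¹ log(1 + e^{−βh})` by `β⁻¹` times the binary relative entropy of `x` from the
Fermi–Dirac value `(1 + e^{βh})⁻¹`; as the rows of `(Pᵢⱼ²)` sum to one, summing gives the bound.
Equality forces `xⱼ = (1 + e^{βμᵢ})⁻¹` whenever `Pᵢⱼ ≠ 0`, that is
`diag((1 + e^{βμ})⁻¹) P = P diag(x)`, which says `X = (I + exp(βH))⁻¹`.
-/

open Real

noncomputable def fermiDirac (β h : ℝ) : ℝ := (1 + exp (β * h))⁻¹

noncomputable def binaryFreeEnergy (β h x : ℝ) : ℝ :=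
  h * x + β⁻¹ * (x * log x + (1 - x) * log (1 - x))

lemma fermiDirac_pos (β h : ℝ) : 0 < fermiDirac β h := by
  unfold fermiDirac; positivity

lemma fermiDirac_lt_one (β h : ℝ) : fermiDirac β h < 1 :=
  inv_lt_one_of_one_lt₀ (lt_add_of_pos_right 1 (exp_pos _))

lemma log_fermiDirac (β h : ℝ) : log (fermiDirac β h) = -log (1 + exp (β * h)) :=
  log_inv _

lemma log_one_sub_fermiDirac (β h : ℝ) :
    log (1 - fermiDirac β h) = β * h - log (1 + exp (β * h)) := by
  have hpos : (0 : ℝ) < 1 + exp (β * h) := by positivity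
  have : 1 - fermiDirac β h = exp (β * h) / (1 + exp (β * h)) := by
    rw [fermiDirac]; field_simp; ring
  rw [this, log_div (exp_pos _).ne' hpos.ne', log_exp]

lemma log_one_add_exp_neg (t : ℝ) : log (1 + exp (-t)) = log (1 + exp t) - t := by
  have : 1 + exp (-t) = (1 + exp t) / exp t := by
    rw [exp_neg]; field_simp; ring
  rw [this, log_div (by positivity) (exp_pos _).ne', log_exp]

lemma binary_relEntropy_pos {x y : ℝ} (hx₀ : 0 < x) (hx₁ : x < 1) (hy₀ : 0 < y) (hy₁ : y < 1)
    (hxy : x ≠ y) :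
    0 < x * (log x - log y) + (1 - x) * (log (1 - x) - log (1 - y)) := by
  have h₀ : log (y / x) < y / x - 1 :=
    log_lt_sub_one_of_pos (div_pos hy₀ hx₀) (by rwa [ne_eq, div_eq_one_iff_eq hx₀.ne', eq_comm])
  have h₁ : log ((1 - y) / (1 - x)) ≤ (1 - y) / (1 - x) - 1 :=
    log_le_sub_one_of_pos (div_pos (by linarith) (by linarith))
  rw [log_div hy₀.ne' hx₀.ne'] at h₀
  rw [log_div (by linarith) (by linarith)] at h₁
  have e₀ : x * (y / x - 1) = y - x := by field_simp
  have e₁ : (1 - x) * ((1 - y) / (1 - x) - 1) = x - y := by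
    field_simp [(by linarith : (1 : ℝ) - x ≠ 0)]; ring
  linarith [mul_lt_mul_of_pos_left h₀ hx₀,
    mul_le_mul_of_nonneg_left h₁ (by linarith : 0 ≤ 1 - x)]

lemma binaryFreeEnergy_sub_eq {β : ℝ} (hβ : β ≠ 0) (h x : ℝ) :
    binaryFreeEnergy β h x - -β⁻¹ * log (1 + exp (-β * h)) =
      β⁻¹ * (x * (log x - log (fermiDirac β h)) +
        (1 - x) * (log (1 - x) - log (1 - fermiDirac β h))) := by
  rw [binaryFreeEnergy, log_fermiDirac, log_one_sub_fermiDirac, neg_mul β, log_one_add_exp_neg]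
  field_simp
  ring

lemma binaryFreeEnergy_fermiDirac {β : ℝ} (hβ : β ≠ 0) (h : ℝ) :
    binaryFreeEnergy β h (fermiDirac β h) = -β⁻¹ * log (1 + exp (-β * h)) := by
  rw [← sub_eq_zero, binaryFreeEnergy_sub_eq hβ]
  simp

lemma lt_binaryFreeEnergy {β : ℝ} (hβ : 0 < β) (h : ℝ) {x : ℝ} (hx₀ : 0 < x) (hx₁ : x < 1)
    (hx : x ≠ fermiDirac β h) :
    -β⁻¹ * log (1 + exp (-β * h)) < binaryFreeEnergy β h x := by
  rw [← sub_pos, binaryFreeEnergy_sub_eq hβ.ne']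
  exact mul_pos (inv_pos.mpr hβ)
    (binary_relEntropy_pos hx₀ hx₁ (fermiDirac_pos β h) (fermiDirac_lt_one β h) hx)

lemma le_binaryFreeEnergy {β : ℝ} (hβ : 0 < β) (h : ℝ) {x : ℝ} (hx₀ : 0 < x) (hx₁ : x < 1) :
    -β⁻¹ * log (1 + exp (-β * h)) ≤ binaryFreeEnergy β h x := by
  rcases eq_or_ne x (fermiDirac β h) with rfl | hx
  · exact (binaryFreeEnergy_fermiDirac hβ.ne' h).ge
  · exact (lt_binaryFreeEnergy hβ h hx₀ hx₁ hx).le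

lemma sum_eq_weighted_sum {ι κ : Type*} [Fintype ι] [Fintype κ] {w : ι → κ → ℝ}
    (hw₁ : ∀ i, ∑ j, w i j = 1) (a : ι → ℝ) :
    ∑ i, a i = ∑ i, ∑ j, w i j * a i := by
  simp only [← Finset.sum_mul, hw₁, one_mul]

lemma sum_le_weighted_sum {ι κ : Type*} [Fintype ι] [Fintype κ] {w b : ι → κ → ℝ} {a : ι → ℝ}
    (hw₀ : ∀ i j, 0 ≤ w i j) (hw₁ : ∀ i, ∑ j, w i j = 1) (hab : ∀ i j, a i ≤ b i j) :
    ∑ i, a i ≤ ∑ i, ∑ j, w i j * b i j := by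
  rw [sum_eq_weighted_sum hw₁ a]
  gcongr with i _ j _
  exacts [hw₀ i j, hab i j]

lemma sum_lt_weighted_sum {ι κ : Type*} [Fintype ι] [Fintype κ] {w b : ι → κ → ℝ} {a : ι → ℝ}
    (hw₀ : ∀ i j, 0 ≤ w i j) (hw₁ : ∀ i, ∑ j, w i j = 1) (hab : ∀ i j, a i ≤ b i j)
    (hlt : ∃ i j, 0 < w i j ∧ a i < b i j) :
    ∑ i, a i < ∑ i, ∑ j, w i j * b i j := by
  obtain ⟨i, j, hw, h⟩ := hlt
  have hle (i j) : w i j * a i ≤ w i j * b i j := mul_le_mul_of_nonneg_left (hab i j) (hw₀ i j)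
  rw [sum_eq_weighted_sum hw₁ a]
  exact Finset.sum_lt_sum (fun i _ => Finset.sum_le_sum fun j _ => hle i j)
    ⟨i, Finset.mem_univ _, Finset.sum_lt_sum (fun j _ => hle i j)
      ⟨j, Finset.mem_univ _, mul_lt_mul_of_pos_left h hw⟩⟩

open Unitary

namespace Matrix
variable {ι : Type*} [Fintype ι] [DecidableEq ι]

lemma continuousOn_spectrum_real (A : Matrix ι ι ℝ) (g : ℝ → ℝ) :
    ContinuousOn g (spectrum ℝ A) :=
  A.finite_spectrum.continuousOn g

lemma sum_sq_star_mul_apply_left (U V : unitaryGroup ι ℝ) (j : ι) :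
    ∑ i, (star (U : Matrix ι ι ℝ) * V) i j ^ 2 = 1 := by
  simpa [mul_apply, sq, mul_comm] using
    congrFun (congrFun (UnitaryGroup.star_mul_self (U⁻¹ * V)) j) j

lemma sum_sq_star_mul_apply_right (U V : unitaryGroup ι ℝ) (i : ι) :
    ∑ j, (star (U : Matrix ι ι ℝ) * V) i j ^ 2 = 1 := by
  simpa [mul_apply, sq, mul_comm] using
    congrFun (congrFun (mem_unitaryGroup_iff.mp (U⁻¹ * V).2) i) i

lemma isHermitian_cfc (A : Matrix ι ι ℝ) (g : ℝ → ℝ) : (cfc g A).IsHermitian :=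
  (cfc_predicate g A).isHermitian

lemma trace_diagonal_mul_mul_diagonal_mul (a b : ι → ℝ) (P Q : Matrix ι ι ℝ) :
    (diagonal a * P * diagonal b * Q).trace = ∑ i, ∑ j, a i * P i j * b j * Q j i := by
  simp only [trace, diag_apply, mul_apply]
  simp [diagonal_apply]

lemma trace_conj_diagonal_mul_conj_diagonal (U V : unitaryGroup ι ℝ) (a b : ι → ℝ) :
    (conjStarAlgAut ℝ _ U (diagonal a) * conjStarAlgAut ℝ _ V (diagonal b)).trace =
      ∑ i, ∑ j, (star (U : Matrix ι ι ℝ) * V) i j ^ 2 * (a i * b j) := by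
  have hU : (U : Matrix ι ι ℝ) * star (U : Matrix ι ι ℝ) = 1 := mem_unitaryGroup_iff.mp U.2
  have hAB : conjStarAlgAut ℝ _ U (diagonal a) * conjStarAlgAut ℝ _ V (diagonal b) =
      U * (diagonal a * (star (U : Matrix ι ι ℝ) * V) * diagonal b *
        star (star (U : Matrix ι ι ℝ) * V)) * star (U : Matrix ι ι ℝ) := by
    simp only [conjStarAlgAut_apply, star_mul, star_star, mul_assoc, hU, mul_one]
  rw [hAB, trace_mul_cycle, ← mul_assoc, mem_unitaryGroup_iff'.mp U.2, one_mul,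
    trace_diagonal_mul_mul_diagonal_mul]
  refine Finset.sum_congr rfl fun i _ => Finset.sum_congr rfl fun j _ => ?_
  simp only [star_apply, star_trivial]
  ring

lemma conj_diagonal_eq_of_star_mul_apply_ne_zero (U V : unitaryGroup ι ℝ) (a b : ι → ℝ)
    (h : ∀ i j, (star (U : Matrix ι ι ℝ) * V) i j ≠ 0 → b j = a i) :
    conjStarAlgAut ℝ _ V (diagonal b) = conjStarAlgAut ℝ _ U (diagonal a) := by
  set P : Matrix ι ι ℝ := star (U : Matrix ι ι ℝ) * V
  have hU : (U : Matrix ι ι ℝ) * star (U : Matrix ι ι ℝ) = 1 := mem_unitaryGroup_iff.mp U.2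
  have hV : (V : Matrix ι ι ℝ) * star (V : Matrix ι ι ℝ) = 1 := mem_unitaryGroup_iff.mp V.2
  have hcomm : P * diagonal b = diagonal a * P := by
    ext i j
    rw [mul_diagonal, diagonal_mul]
    by_cases hij : P i j = 0
    · simp [hij]
    · rw [h i j hij, mul_comm]
  have hVP : (V : Matrix ι ι ℝ) = U * P := by rw [← mul_assoc, hU, one_mul]
  have hPP : P * star P = 1 := by
    simp only [P, star_mul, star_star, mul_assoc]
    rw [← mul_assoc (V : Matrix ι ι ℝ), hV, one_mul, mem_unitaryGroup_iff'.mp U.2]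
  calc conjStarAlgAut ℝ _ V (diagonal b)
      = U * (P * diagonal b) * star P * star (U : Matrix ι ι ℝ) := by
        rw [conjStarAlgAut_apply, hVP, star_mul]; simp only [mul_assoc]
    _ = conjStarAlgAut ℝ _ U (diagonal a) := by
        rw [hcomm, conjStarAlgAut_apply]; simp only [mul_assoc, hPP, mul_one]

namespace IsHermitian
variable {A B : Matrix ι ι ℝ}

lemma eq_conj_diagonal_eigenvalues (hA : A.IsHermitian) :
    A = conjStarAlgAut ℝ _ hA.eigenvectorUnitary (diagonal hA.eigenvalues) := by
  conv_lhs => rw [hA.spectral_theorem]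
  rfl

lemma cfc_eq_conj_diagonal_s1 (hA : A.IsHermitian) (g : ℝ → ℝ) :
    cfc g A = conjStarAlgAut ℝ _ hA.eigenvectorUnitary (diagonal (g ∘ hA.eigenvalues)) := by
  rw [hA.cfc_eq, IsHermitian.cfc]
  rfl

lemma eq_cfc_of_star_mul_apply_ne_zero (hA : A.IsHermitian) (hB : B.IsHermitian) (g : ℝ → ℝ)
    (h : ∀ i j, (star (hA.eigenvectorUnitary : Matrix ι ι ℝ) * hB.eigenvectorUnitary) i j ≠ 0 →
      hB.eigenvalues j = g (hA.eigenvalues i)) :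
    B = cfc g A := by
  rw [hA.cfc_eq_conj_diagonal_s1, hB.eq_conj_diagonal_eigenvalues]
  exact conj_diagonal_eq_of_star_mul_apply_ne_zero _ _ _ _ h

lemma trace_cfc (hA : A.IsHermitian) (g : ℝ → ℝ) :
    (cfc g A).trace = ∑ i, g (hA.eigenvalues i) := by
  rw [hA.cfc_eq_conj_diagonal_s1, conjStarAlgAut_apply, trace_mul_cycle, coe_star_mul_self,
    one_mul, trace_diagonal]
  rfl

lemma trace_mul_cfc (hA : A.IsHermitian) (g : ℝ → ℝ) :
    (A * cfc g A).trace = ∑ i, hA.eigenvalues i * g (hA.eigenvalues i) := by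
  rw [← hA.trace_cfc (fun t => t * g t),
    cfc_mul (fun t => t) g A (continuousOn_spectrum_real A _) (continuousOn_spectrum_real A _),
    cfc_id' ℝ A hA.isSelfAdjoint]

lemma exp_cfc (hA : A.IsHermitian) (g : ℝ → ℝ) :
    NormedSpace.exp (cfc g A) = cfc (fun t => Real.exp (g t)) A := by
  have := exp_units_conj (toUnits hA.eigenvectorUnitary) (diagonal (g ∘ hA.eigenvalues))
  rw [hA.cfc_eq_conj_diagonal_s1, hA.cfc_eq_conj_diagonal_s1, conjStarAlgAut_apply,
    conjStarAlgAut_apply]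
  refine this.trans ?_
  rw [exp_diagonal, Pi.exp_def]
  simp only [exp_eq_exp_ℝ]
  rfl

lemma inv_cfc (hA : A.IsHermitian) {g : ℝ → ℝ} (hg : ∀ x ∈ spectrum ℝ A, g x ≠ 0) :
    (cfc g A)⁻¹ = cfc (fun t => (g t)⁻¹) A := by
  rw [nonsing_inv_eq_ringInverse, cfc_inv g A hg (continuousOn_spectrum_real A g)]

lemma one_add_exp_smul (hA : A.IsHermitian) (r : ℝ) :
    1 + NormedSpace.exp (r • A) = cfc (fun t => 1 + Real.exp (r * t)) A := by
  rw [← cfc_const_mul_id r A hA.isSelfAdjoint, hA.exp_cfc, cfc_const_add _ _ A,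
    Algebra.algebraMap_eq_smul_one, one_smul]

lemma inv_one_add_exp_smul (hA : A.IsHermitian) (r : ℝ) :
    (1 + NormedSpace.exp (r • A))⁻¹ = cfc (fun t => (1 + Real.exp (r * t))⁻¹) A := by
  rw [hA.one_add_exp_smul, hA.inv_cfc fun x _ => by positivity]

lemma trace_mul_add_mul_trace_cfc (hA : A.IsHermitian) (hB : B.IsHermitian) (c : ℝ)
    (g : ℝ → ℝ) :
    (A * B).trace + c * (cfc g B).trace =
      ∑ i, ∑ j, (star (hA.eigenvectorUnitary : Matrix ι ι ℝ) * hB.eigenvectorUnitary) i j ^ 2 *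
        (hA.eigenvalues i * hB.eigenvalues j + c * g (hB.eigenvalues j)) := by
  have htr := trace_conj_diagonal_mul_conj_diagonal hA.eigenvectorUnitary hB.eigenvectorUnitary
    hA.eigenvalues hB.eigenvalues
  rw [← hA.eq_conj_diagonal_eigenvalues, ← hB.eq_conj_diagonal_eigenvalues] at htr
  simp only [mul_add, Finset.sum_add_distrib]
  rw [htr, hB.trace_cfc, Finset.mul_sum]
  congr 1
  rw [Finset.sum_comm]
  refine Finset.sum_congr rfl fun j _ => ?_
  rw [← Finset.sum_mul, sum_sq_star_mul_apply_left, one_mul]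

lemma eigenvalues_lt_one (hA : A.IsHermitian) (h : (1 - A).PosDef) (i : ι) :
    hA.eigenvalues i < 1 := by
  have hmem : 1 - hA.eigenvalues i ∈ spectrum ℝ (1 - A) := by
    rw [← map_one (algebraMap ℝ (Matrix ι ι ℝ)), ← spectrum.singleton_sub_eq]
    exact Set.sub_mem_sub rfl (hA.eigenvalues_mem_spectrum_real i)
  rw [h.1.spectrum_real_eq_range_eigenvalues] at hmem
  obtain ⟨k, hk⟩ := hmem
  linarith [h.eigenvalues_pos k]

end IsHermitian
end Matrix

section matLog

variable {n : ℕ}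

lemma matLog_eq_cfc_s1 {A : Matrix (Fin n) (Fin n) ℝ} (hA : A.IsHermitian) :
    matLog A = cfc log A := by
  rw [matLog, dif_pos hA, hA.cfc_eq]

lemma mul_matLog_add_one_sub_mul_matLog {X : Matrix (Fin n) (Fin n) ℝ} (hX : X.IsHermitian) :
    X * matLog X + (1 - X) * matLog (1 - X) =
      cfc (fun t => t * log t + (1 - t) * log (1 - t)) X := by
  have hsub : 1 - X = cfc (fun t : ℝ => 1 - t) X := by
    rw [cfc_sub _ _ X (continuousOn_spectrum_real X _) (continuousOn_spectrum_real X _),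
      cfc_const_one ℝ X, cfc_id' ℝ X hX.isSelfAdjoint]
  rw [matLog_eq_cfc_s1 hX, matLog_eq_cfc_s1 (hsub ▸ isHermitian_cfc X _), hsub,
    ← cfc_comp log (fun t : ℝ => 1 - t) X (hg := (X.finite_spectrum.image _).continuousOn _),
    cfc_add _ _ _ (continuousOn_spectrum_real X _) (continuousOn_spectrum_real X _),
    cfc_mul _ _ X (continuousOn_spectrum_real X _) (continuousOn_spectrum_real X _),
    cfc_mul _ _ X (continuousOn_spectrum_real X _) (continuousOn_spectrum_real X _),
    cfc_id' ℝ X hX.isSelfAdjoint]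
  rfl

lemma Matrix.IsHermitian.trace_matLog_one_add_exp_smul {H : Matrix (Fin n) (Fin n) ℝ}
    (hH : H.IsHermitian) (r : ℝ) :
    (matLog (1 + NormedSpace.exp (r • H))).trace =
      ∑ i, log (1 + Real.exp (r * hH.eigenvalues i)) := by
  rw [hH.one_add_exp_smul, matLog_eq_cfc_s1 (isHermitian_cfc H _),
    ← cfc_comp _ _ H (hg := (H.finite_spectrum.image _).continuousOn _), hH.trace_cfc]
  rfl

noncomputable def matrixFreeEnergy (H : Matrix (Fin n) (Fin n) ℝ) (β : ℝ)
    (X : Matrix (Fin n) (Fin n) ℝ) : ℝ :=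
  (H * X).trace + β⁻¹ * ((X * matLog X).trace + ((1 - X) * matLog (1 - X)).trace)

lemma matrixFreeEnergy_cfc {H : Matrix (Fin n) (Fin n) ℝ} (hH : H.IsHermitian) (β : ℝ)
    (g : ℝ → ℝ) :
    matrixFreeEnergy H β (cfc g H) =
      ∑ i, binaryFreeEnergy β (hH.eigenvalues i) (g (hH.eigenvalues i)) := by
  rw [matrixFreeEnergy, ← trace_add, mul_matLog_add_one_sub_mul_matLog (isHermitian_cfc H g),
    ← cfc_comp _ _ H (hg := (H.finite_spectrum.image _).continuousOn _)
      (hf := continuousOn_spectrum_real H _), hH.trace_mul_cfc, hH.trace_cfc, Finset.mul_sum,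
    ← Finset.sum_add_distrib]
  rfl

lemma matrixFreeEnergy_eq_sum {H X : Matrix (Fin n) (Fin n) ℝ} (hH : H.IsHermitian)
    (hX : X.IsHermitian) (β : ℝ) :
    matrixFreeEnergy H β X =
      ∑ i, ∑ j, (star (hH.eigenvectorUnitary : Matrix (Fin n) (Fin n) ℝ) *
        hX.eigenvectorUnitary) i j ^ 2 *
          binaryFreeEnergy β (hH.eigenvalues i) (hX.eigenvalues j) := by
  rw [matrixFreeEnergy, ← trace_add, mul_matLog_add_one_sub_mul_matLog hX,
    hH.trace_mul_add_mul_trace_cfc hX]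
  rfl

end matLog

/-- The minimizer over symmetric matrices `X` with `0 ≺ X ≺ I` of
`Tr[HX] + β⁻¹ (Tr[X log X] + Tr[(I−X) log(I−X)])` is `X = (I + exp(βH))⁻¹`,
with minimum value `−β⁻¹ Tr[log(I + exp(−βH))]`. -/
theorem binary_entropic_min {n : ℕ} (H : Matrix (Fin n) (Fin n) ℝ) (hH : H.IsHermitian)
    (β : ℝ) (hβ : 0 < β)
    (f : Matrix (Fin n) (Fin n) ℝ → ℝ)
    (hf : ∀ X, f X = (H * X).trace +
      β⁻¹ * ((X * matLog X).trace + ((1 - X) * matLog (1 - X)).trace)) :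
    f ((1 + NormedSpace.exp (β • H))⁻¹) =
      -β⁻¹ * (matLog (1 + NormedSpace.exp ((-β) • H))).trace ∧
    ∀ X : Matrix (Fin n) (Fin n) ℝ, X.PosDef → (1 - X).PosDef →
      (-β⁻¹ * (matLog (1 + NormedSpace.exp ((-β) • H))).trace ≤ f X ∧
        (X ≠ (1 + NormedSpace.exp (β • H))⁻¹ →
          -β⁻¹ * (matLog (1 + NormedSpace.exp ((-β) • H))).trace < f X)) := by
  obtain rfl : f = matrixFreeEnergy H β := funext hf
  rw [hH.trace_matLog_one_add_exp_smul, Finset.mul_sum, hH.inv_one_add_exp_smul]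
  refine ⟨?_, fun X hX hX' => ?_⟩
  · rw [matrixFreeEnergy_cfc hH]
    exact Finset.sum_congr rfl fun i _ => binaryFreeEnergy_fermiDirac hβ.ne' _
  have hx₀ := hX.eigenvalues_pos
  have hx₁ := hX.1.eigenvalues_lt_one hX'
  have hw₀ (i j : Fin n) := sq_nonneg
    ((star (hH.eigenvectorUnitary : Matrix (Fin n) (Fin n) ℝ) * hX.1.eigenvectorUnitary) i j)
  have hw₁ := sum_sq_star_mul_apply_right hH.eigenvectorUnitary hX.1.eigenvectorUnitary
  have hle (i j : Fin n) := le_binaryFreeEnergy hβ (hH.eigenvalues i) (hx₀ j) (hx₁ j)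
  rw [matrixFreeEnergy_eq_sum hH hX.1]
  refine ⟨sum_le_weighted_sum hw₀ hw₁ hle, fun hne => sum_lt_weighted_sum hw₀ hw₁ hle ?_⟩
  obtain ⟨i, j, hP, hx⟩ : ∃ i j, (star (hH.eigenvectorUnitary : Matrix (Fin n) (Fin n) ℝ) *
      hX.1.eigenvectorUnitary) i j ≠ 0 ∧ hX.1.eigenvalues j ≠ fermiDirac β (hH.eigenvalues i) := by
    by_contra! h
    exact hne (hH.eq_cfc_of_star_mul_apply_ne_zero hX.1 _ h)
  exact ⟨i, j, by positivity, lt_binaryFreeEnergy hβ _ (hx₀ j) (hx₁ j) hx⟩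
end

section
/- The function g(λ) = b·λ − β⁻¹ Tr[exp(−β(C − λ·A))] on ℝ^m is concave, where λ·A = Σᵢ λᵢ Aᵢ for symmetric matrices A₁,…,A_m. -/
/-!
`X ↦ Tr exp X` is convex on symmetric matrices (Peierls). Diagonalise `H = a • X + c • Y` in an
orthonormal eigenbasis `uᵢ`; then `Tr exp H = ∑ᵢ exp ⟪uᵢ, H uᵢ⟫`, which is at most
`∑ᵢ (a exp ⟪uᵢ, X uᵢ⟫ + c exp ⟪uᵢ, Y uᵢ⟫)` by convexity of `exp`, and
`exp ⟪u, X u⟫ ≤ ⟪u, exp X u⟫` for a unit vector `u` is Jensen's inequality for the probability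
weights `⟪u, vⱼ⟫²` over the eigenvalues of `X`. Summing over the basis gives
`a Tr exp X + c Tr exp Y`. The function `g` is a linear function minus a nonnegative multiple of
`Tr exp` composed with an affine map into symmetric matrices, hence concave.
-/

open Matrix

namespace Matrix

variable {ι : Type*} [Fintype ι] [DecidableEq ι]

lemma diag_conj_diagonal (W : Matrix ι ι ℝ) (d : ι → ℝ) (i : ι) :
    (star W * diagonal d * W) i i = ∑ j, W j i ^ 2 * d j := by
  rw [mul_apply]
  exact Finset.sum_congr rfl fun j _ => by
    simp only [mul_diagonal, star_apply, star_trivial]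
    ring

lemma sum_sq_apply_eq_one_of_mem_unitaryGroup {W : Matrix ι ι ℝ}
    (hW : W ∈ unitaryGroup ι ℝ) (i : ι) : ∑ j, W j i ^ 2 = 1 := by
  simpa [Unitary.star_mul_self_of_mem hW] using (diag_conj_diagonal W 1 i).symm

lemma trace_conj_of_mem_unitaryGroup {U : Matrix ι ι ℝ} (hU : U ∈ unitaryGroup ι ℝ)
    (M : Matrix ι ι ℝ) : (star U * M * U).trace = M.trace := by
  rw [trace_mul_cycle, Unitary.mul_star_self_of_mem hU, one_mul]

namespace IsHermitian

variable {X : Matrix ι ι ℝ} (hX : X.IsHermitian)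
include hX

lemma eq_mul_diagonal_mul_star :
    X = hX.eigenvectorUnitary * diagonal hX.eigenvalues
      * star (hX.eigenvectorUnitary : Matrix ι ι ℝ) := by
  conv_lhs => rw [hX.spectral_theorem, Unitary.conjStarAlgAut_apply]
  rfl

lemma exp_eq_mul_diagonal_mul_star :
    NormedSpace.exp X = hX.eigenvectorUnitary * diagonal (Real.exp ∘ hX.eigenvalues)
      * star (hX.eigenvectorUnitary : Matrix ι ι ℝ) := by
  have hinv : (hX.eigenvectorUnitary : Matrix ι ι ℝ)⁻¹
      = star (hX.eigenvectorUnitary : Matrix ι ι ℝ) :=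
    inv_eq_left_inv (Unitary.coe_star_mul_self _)
  conv_lhs => rw [hX.eq_mul_diagonal_mul_star, ← hinv]
  rw [exp_conj _ _ Unitary.isUnit_coe, hinv, exp_diagonal, Pi.exp_def]
  congr 3
  funext j
  simp [← Real.exp_eq_exp_ℝ]

lemma trace_exp : (NormedSpace.exp X).trace = ∑ i, Real.exp (hX.eigenvalues i) := by
  rw [hX.exp_eq_mul_diagonal_mul_star, trace_mul_cycle, Unitary.coe_star_mul_self, one_mul,
    trace_diagonal]
  rfl

lemma eigenvalues_eq_diag_conj (i : ι) :
    hX.eigenvalues i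
      = (star (hX.eigenvectorUnitary : Matrix ι ι ℝ) * X * hX.eigenvectorUnitary) i i := by
  have hdiag := hX.conjStarAlgAut_star_eigenvectorUnitary
  rw [Unitary.conjStarAlgAut_star_apply] at hdiag
  simp [hdiag]

lemma exp_diag_conj_le_diag_conj_exp {U : Matrix ι ι ℝ} (hU : U ∈ unitaryGroup ι ℝ) (i : ι) :
    Real.exp ((star U * X * U) i i) ≤ (star U * NormedSpace.exp X * U) i i := by
  set V : Matrix ι ι ℝ := ↑hX.eigenvectorUnitary
  have hW : star V * U ∈ unitaryGroup ι ℝ :=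
    Submonoid.mul_mem _ (Unitary.star_mem hX.eigenvectorUnitary.2) hU
  have hconj (d : ι → ℝ) : star U * (V * diagonal d * star V) * U
      = star (star V * U) * diagonal d * (star V * U) := by
    simp only [star_mul, star_star, Matrix.mul_assoc]
  conv_lhs => rw [hX.eq_mul_diagonal_mul_star]
  rw [hX.exp_eq_mul_diagonal_mul_star, hconj, hconj, diag_conj_diagonal, diag_conj_diagonal]
  exact convexOn_exp.map_sum_le (fun j _ => sq_nonneg _)
    (sum_sq_apply_eq_one_of_mem_unitaryGroup hW i) (fun j _ => Set.mem_univ _)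

end IsHermitian

lemma convexOn_trace_exp :
    ConvexOn ℝ {X : Matrix ι ι ℝ | X.IsHermitian} (fun X => (NormedSpace.exp X).trace) := by
  refine ⟨(selfAdjoint.submodule ℝ (Matrix ι ι ℝ)).convex, fun X hX Y hY a c ha hc hac => ?_⟩
  have hH : (a • X + c • Y).IsHermitian := (hX.smul (.all a)).add (hY.smul (.all c))
  set U : Matrix ι ι ℝ := ↑hH.eigenvectorUnitary
  have hU : U ∈ unitaryGroup ι ℝ := hH.eigenvectorUnitary.2
  have hdiag (i : ι) : (star U * (a • X + c • Y) * U) i i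
      = a * (star U * X * U) i i + c * (star U * Y * U) i i := by
    simp [Matrix.mul_add, Matrix.add_mul]
  calc (NormedSpace.exp (a • X + c • Y)).trace
      = ∑ i, Real.exp (a * (star U * X * U) i i + c * (star U * Y * U) i i) := by
        simp only [hH.trace_exp, hH.eigenvalues_eq_diag_conj, hdiag, U]
    _ ≤ ∑ i, (a * Real.exp ((star U * X * U) i i) + c * Real.exp ((star U * Y * U) i i)) :=
        Finset.sum_le_sum fun i _ => convexOn_exp.2 trivial trivial ha hc hac
    _ ≤ ∑ i, (a * (star U * NormedSpace.exp X * U) i i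
          + c * (star U * NormedSpace.exp Y * U) i i) := by
        gcongr with i
        · exact hX.exp_diag_conj_le_diag_conj_exp hU i
        · exact hY.exp_diag_conj_le_diag_conj_exp hU i
    _ = a * (star U * NormedSpace.exp X * U).trace
          + c * (star U * NormedSpace.exp Y * U).trace := by
        rw [Finset.sum_add_distrib, ← Finset.mul_sum, ← Finset.mul_sum]
        rfl
    _ = a * (NormedSpace.exp X).trace + c * (NormedSpace.exp Y).trace := by
        rw [trace_conj_of_mem_unitaryGroup hU, trace_conj_of_mem_unitaryGroup hU]

end Matrix

/-- The dual function `g(λ) = b·λ − β⁻¹ Tr[exp(−β(C − λ·A))]` is concave on `ℝ^m`. -/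
theorem dual_concave {n m : ℕ} (C : Matrix (Fin n) (Fin n) ℝ) (hC : C.IsHermitian)
    (A : Fin m → Matrix (Fin n) (Fin n) ℝ) (hA : ∀ i, (A i).IsHermitian)
    (b : Fin m → ℝ) (β : ℝ) (hβ : 0 < β) :
    ConcaveOn ℝ Set.univ (fun l : Fin m → ℝ =>
      b ⬝ᵥ l - β⁻¹ * (NormedSpace.exp ((-β) • (C - ∑ i, l i • A i))).trace) := by
  let M : (Fin m → ℝ) →ᵃ[ℝ] Matrix (Fin n) (Fin n) ℝ :=
    (-β) • (AffineMap.const ℝ _ C - (Fintype.linearCombination ℝ A).toAffineMap)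
  have hM (l : Fin m → ℝ) : M l = (-β) • (C - ∑ i, l i • A i) := by
    simp [M, Fintype.linearCombination_apply]
  have hMH (l : Fin m → ℝ) : (M l).IsHermitian := by
    rw [hM, isHermitian_iff_isSelfAdjoint]
    exact (IsSelfAdjoint.all _).smul <| hC.isSelfAdjoint.sub <|
      isSelfAdjoint_sum _ fun i _ => (IsSelfAdjoint.all _).smul (hA i).isSelfAdjoint
  have htrace : ConvexOn ℝ Set.univ (fun l => (NormedSpace.exp (M l)).trace) :=
    (convexOn_trace_exp.comp_affineMap M).subset (fun l _ => hMH l) convex_univ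
  have hg := ((dotProductBilin ℝ ℝ b).concaveOn convex_univ).add
    (htrace.smul (inv_nonneg.2 hβ.le)).neg
  refine hg.congr fun l _ => ?_
  simp only [Pi.add_apply, Pi.neg_apply, hM, smul_eq_mul, dotProductBilin_apply_apply]
  ring
end

section
/- The gradient of g(λ) = b·λ − β⁻¹ Tr[exp(−β(C − λ·A))] is ∇g(λ) = b − (Tr[Aᵢ exp(−β(C − λ·A))])_{i=1,…,m}. -/
/-!
For a continuous linear map `τ` with `τ (x * y) = τ (y * x)`, such as the trace, cyclicity turns
the noncommutative derivative `h ↦ ∑ᵢ xᵏ⁻ⁱ h xⁱ` of `x ↦ xᵏ⁺¹` into `h ↦ (k + 1) τ (xᵏ h)`.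
Differentiating the exponential series term by term (the derivatives are dominated by
`‖τ‖ ‖1‖ Rᵏ / k!` on a ball around `x`) gives `D (τ ∘ exp) (x) h = τ (exp x * h)`. With `τ` the
trace, the chain rule along the affine map `λ ↦ -β (C - λ·A)` yields the factor `β⁻¹ · β = 1` in
front of `Tr (exp (…) * Aᵢ)`.
-/

open NormedSpace Nat

theorem norm_pow_le_norm_one_mul {𝔸 : Type*} [NormedRing 𝔸] (a : 𝔸) (n : ℕ) :
    ‖a ^ n‖ ≤ ‖(1 : 𝔸)‖ * ‖a‖ ^ n := by
  induction n with
  | zero => simp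
  | succ n ih =>
    calc ‖a ^ (n + 1)‖ ≤ ‖a ^ n‖ * ‖a‖ := pow_succ a n ▸ norm_mul_le _ _
    _ ≤ ‖(1 : 𝔸)‖ * ‖a‖ ^ n * ‖a‖ := by gcongr
    _ = ‖(1 : 𝔸)‖ * ‖a‖ ^ (n + 1) := by ring

theorem hasFDerivAt_map_pow_succ_of_map_mul_comm {𝕜 𝔸 F : Type*} [NontriviallyNormedField 𝕜]
    [NormedRing 𝔸] [NormedAlgebra 𝕜 𝔸] [NormedAddCommGroup F] [NormedSpace 𝕜 F]
    {τ : 𝔸 →L[𝕜] F} (hτ : ∀ x y, τ (x * y) = τ (y * x)) (k : ℕ) (x : 𝔸) :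
    HasFDerivAt (fun y => τ (y ^ (k + 1)))
      ((k + 1 : 𝕜) • τ.comp (ContinuousLinearMap.mul 𝕜 𝔸 (x ^ k))) x := by
  refine (τ.hasFDerivAt.comp x (hasFDerivAt_pow' (k + 1))).congr_fderiv ?_
  ext h
  have hterm : ∀ i ∈ Finset.range (k + 1), τ (x ^ (k - i) * h * x ^ i) = τ (x ^ k * h) := by
    intro i hi
    rw [hτ, ← mul_assoc, ← pow_add, Nat.add_sub_cancel' (Finset.mem_range_succ_iff.mp hi)]
  simp [map_sum, Finset.sum_congr rfl hterm, ← Nat.cast_smul_eq_nsmul 𝕜]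

theorem norm_inv_factorial_smul_comp_mul_pow_le {𝕜 𝔸 F : Type*} [RCLike 𝕜] [NormedRing 𝔸]
    [NormedAlgebra 𝕜 𝔸] [NormedAddCommGroup F] [NormedSpace 𝕜 F] (τ : 𝔸 →L[𝕜] F) (y : 𝔸)
    (n : ℕ) :
    ‖(n ! : 𝕜)⁻¹ • τ.comp (ContinuousLinearMap.mul 𝕜 𝔸 (y ^ n))‖ ≤
      ‖τ‖ * ‖(1 : 𝔸)‖ * (‖y‖ ^ n / n !) :=
  calc _ ≤ ‖(n ! : 𝕜)⁻¹‖ * ‖τ.comp (ContinuousLinearMap.mul 𝕜 𝔸 (y ^ n))‖ := norm_smul_le _ _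
    _ ≤ ‖(n ! : 𝕜)⁻¹‖ * (‖τ‖ * ‖y ^ n‖) := by
        grw [τ.opNorm_comp_le, ContinuousLinearMap.opNorm_mul_apply_le]
    _ ≤ (n ! : ℝ)⁻¹ * (‖τ‖ * (‖(1 : 𝔸)‖ * ‖y‖ ^ n)) := by
        rw [norm_inv, RCLike.norm_natCast]
        gcongr
        exact norm_pow_le_norm_one_mul y n
    _ = _ := by ring

theorem hasFDerivAt_map_exp_of_map_mul_comm {𝕜 𝔸 F : Type*} [RCLike 𝕜] [NormedRing 𝔸]
    [NormedAlgebra 𝕜 𝔸] [CompleteSpace 𝔸] [NormedAddCommGroup F] [NormedSpace 𝕜 F]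
    [CompleteSpace F] {τ : 𝔸 →L[𝕜] F} (hτ : ∀ x y, τ (x * y) = τ (y * x)) (x : 𝔸) :
    HasFDerivAt (fun y => τ (exp y)) (τ.comp (ContinuousLinearMap.mul 𝕜 𝔸 (exp x))) x := by
  set R := ‖x‖ + 1
  have hterm : ∀ n, ∀ y ∈ Metric.ball x 1,
      HasFDerivAt (fun z => ((n + 1)! : 𝕜)⁻¹ • τ (z ^ (n + 1)))
        ((n ! : 𝕜)⁻¹ • τ.comp (ContinuousLinearMap.mul 𝕜 𝔸 (y ^ n))) y := by
    intro n y _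
    refine ((hasFDerivAt_map_pow_succ_of_map_mul_comm hτ n y).const_smul _).congr_fderiv ?_
    rw [smul_smul, Nat.factorial_succ]
    push_cast
    field_simp
  have hbound : ∀ n, ∀ y ∈ Metric.ball x 1,
      ‖(n ! : 𝕜)⁻¹ • τ.comp (ContinuousLinearMap.mul 𝕜 𝔸 (y ^ n))‖ ≤
        ‖τ‖ * ‖(1 : 𝔸)‖ * (R ^ n / n !) := by
    intro n y hy
    have hyR : ‖y‖ ≤ R := by
      have := norm_le_norm_add_norm_sub' y x
      rw [mem_ball_iff_norm] at hy
      linarith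
    exact (norm_inv_factorial_smul_comp_mul_pow_le τ y n).trans (by gcongr)
  have hsummable : Summable fun n => ‖τ‖ * ‖(1 : 𝔸)‖ * (R ^ n / n !) :=
    (Real.summable_pow_div_factorial R).mul_left _
  -- Splitting off the constant term `τ 1` shifts the series so that the derivative of its `n`-th
  -- term is the `n`-th term of the exponential series of `τ (exp x * ·)`.
  have hexp (y : 𝔸) :
      HasSum (fun n => ((n + 1)! : 𝕜)⁻¹ • τ (y ^ (n + 1))) (τ (exp y) - τ 1) := by
    have := (exp_series_hasSum_exp' (𝕂 := 𝕜) y).map τ τ.continuous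
    simpa [Function.comp_def] using (hasSum_nat_add_iff' 1).mpr this
  have hderiv : HasSum (fun n => (n ! : 𝕜)⁻¹ • τ.comp (ContinuousLinearMap.mul 𝕜 𝔸 (x ^ n)))
      (τ.comp (ContinuousLinearMap.mul 𝕜 𝔸 (exp x))) := by
    have := (exp_series_hasSum_exp' (𝕂 := 𝕜) x).map
      ((ContinuousLinearMap.compL 𝕜 𝔸 𝔸 F τ).comp (ContinuousLinearMap.mul 𝕜 𝔸))
      (ContinuousLinearMap.continuous _)
    simpa [Function.comp_def] using this
  -- `convex_ball` needs a real normed-space structure on `𝔸`.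
  let _ := NormedSpace.restrictScalars ℝ 𝕜 𝔸
  have hseries := hasFDerivAt_tsum_of_isPreconnected hsummable Metric.isOpen_ball
    (convex_ball x 1).isPreconnected hterm hbound (Metric.mem_ball_self one_pos)
    (hexp x).summable (Metric.mem_ball_self one_pos)
  rw [hderiv.tsum_eq] at hseries
  have hsplit : (fun y => τ (exp y)) = fun y => τ 1 + ∑' n, ((n + 1)! : 𝕜)⁻¹ • τ (y ^ (n + 1)) :=
    funext fun y => by rw [(hexp y).tsum_eq, add_sub_cancel]
  exact hsplit ▸ hseries.const_add (τ 1)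

open Matrix

theorem dual_gradient_general {n m : ℕ} (C : Matrix (Fin n) (Fin n) ℝ)
    (A : Fin m → Matrix (Fin n) (Fin n) ℝ)
    (b : Fin m → ℝ) (β : ℝ) (hβ : 0 < β) (lam : EuclideanSpace ℝ (Fin m)) :
    HasGradientAt
      (fun l : EuclideanSpace ℝ (Fin m) =>
        b ⬝ᵥ ⇑l - β⁻¹ * (NormedSpace.exp ((-β) • (C - ∑ i, l i • A i))).trace)
      (show EuclideanSpace ℝ (Fin m) from WithLp.toLp 2 fun i =>
        b i - (A i * NormedSpace.exp ((-β) • (C - ∑ j, lam j • A j))).trace)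
      lam := by
  open scoped Matrix.Norms.Operator in
  have hexp := hasFDerivAt_map_exp_of_map_mul_comm
    (τ := (traceLinearMap (Fin n) ℝ ℝ).toContinuousLinearMap) trace_mul_comm
    ((-β) • (C - ∑ j, lam j • A j))
  have hcoord (i : Fin m) := PiLp.hasFDerivAt_apply (𝕜 := ℝ) 2 lam i
  have hdot := HasFDerivAt.fun_sum (u := Finset.univ) fun i _ => (hcoord i).const_mul (b i)
  open scoped Matrix.Norms.Operator in
  have harg := ((HasFDerivAt.fun_sum (u := Finset.univ) fun i _ =>
    (hcoord i).smul_const (A i)).const_sub C).const_smul (-β)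
  rw [hasGradientAt_iff_hasFDerivAt]
  refine (hdot.sub ((hexp.comp lam harg).const_mul β⁻¹)).congr_fderiv
    (ContinuousLinearMap.ext fun v => ?_)
  simp only [neg_smul, smul_neg, neg_neg, ContinuousLinearMap.comp_smulₛₗ, Real.ringHom_apply,
    ne_eq, hβ.ne', not_false_eq_true, inv_smul_smul₀, _root_.sub_apply, _root_.sum_apply,
    PiLp.proj_apply, ContinuousLinearMap.comp_apply, ContinuousLinearMap.smulRight_apply, map_sum,
    map_smul, ← Finset.sum_sub_distrib, trace_mul_comm (A _), InnerProductSpace.toDual_apply_apply,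
    PiLp.inner_apply, RCLike.inner_apply, mul_sub, mul_comm]
  rfl

/-- The gradient of `g(λ) = b·λ − β⁻¹ Tr[exp(−β(C − λ·A))]` is
`∇g(λ) = b − (Tr[Aᵢ exp(−β(C − λ·A))])ᵢ`. -/
theorem dual_gradient {n m : ℕ} (C : Matrix (Fin n) (Fin n) ℝ) (hC : C.IsHermitian)
    (A : Fin m → Matrix (Fin n) (Fin n) ℝ) (hA : ∀ i, (A i).IsHermitian)
    (b : Fin m → ℝ) (β : ℝ) (hβ : 0 < β) (lam : EuclideanSpace ℝ (Fin m)) :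
    HasGradientAt
      (fun l : EuclideanSpace ℝ (Fin m) =>
        b ⬝ᵥ ⇑l - β⁻¹ * (NormedSpace.exp ((-β) • (C - ∑ i, l i • A i))).trace)
      (show EuclideanSpace ℝ (Fin m) from WithLp.toLp 2 fun i =>
        b i - (A i * NormedSpace.exp ((-β) • (C - ∑ j, lam j • A j))).trace)
      lam :=
  dual_gradient_general C A b β hβ lam
end

section
/- Golden–Thompson inequality: for symmetric (Hermitian) matrices A and B, Tr[exp(A + B)] ≤ Tr[exp(A) exp(B)]. -/
/-!
By the Lie product formula, `exp (A + B)` is the limit of `(exp (A / m) * exp (B / m)) ^ m`, and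
along `m = 2 ^ k` the trace of this product is at most `Tr[exp A * exp B]` by the inequality
`Tr[(X Y) ^ 2 ^ k] ≤ Tr[X ^ 2 ^ k * Y ^ 2 ^ k]` for symmetric `X`, `Y`. That inequality is proved by
induction on `k`, jointly with `Tr[(M ^ 2 ^ k)ᵀ M ^ 2 ^ k] ≤ Tr[(Mᵀ M) ^ 2 ^ k]`: each doubling
step is the Cauchy–Schwarz inequality for the Frobenius inner product `Tr[Cᵀ D]` combined with
cyclic rearrangements under the trace.
-/

open Matrix NormedSpace Filter Topology Asymptotics

namespace Matrix

variable {m n ι : Type*} [Fintype m] [Fintype n] [Fintype ι]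

theorem trace_transpose_mul_eq_sum (C D : Matrix m n ℝ) :
    (Cᵀ * D).trace = ∑ p : m × n, C p.1 p.2 * D p.1 p.2 := by
  simp only [trace, diag, mul_apply, transpose_apply, Fintype.sum_prod_type]
  exact Finset.sum_comm

theorem trace_transpose_mul_self_nonneg (C : Matrix m n ℝ) : 0 ≤ (Cᵀ * C).trace := by
  rw [trace_transpose_mul_eq_sum]
  exact Finset.sum_nonneg fun p _ => mul_self_nonneg _

theorem trace_transpose_mul_sq_le (C D : Matrix m n ℝ) :
    (Cᵀ * D).trace ^ 2 ≤ (Cᵀ * C).trace * (Dᵀ * D).trace := by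
  simp only [trace_transpose_mul_eq_sum, ← sq]
  exact Finset.sum_mul_sq_le_sq_mul_sq _ _ _

theorem trace_mul_self_le_trace_transpose_mul_self (N : Matrix ι ι ℝ) :
    (N * N).trace ≤ (Nᵀ * N).trace := by
  refine le_of_sq_le_sq ?_ (trace_transpose_mul_self_nonneg N)
  have h := trace_transpose_mul_sq_le Nᵀ N
  rwa [transpose_transpose, trace_mul_comm N Nᵀ, ← sq (Nᵀ * N).trace] at h

theorem trace_mul_le_of_trace_mul_self_eq {S T : Matrix ι ι ℝ} (hS : S.IsSymm)
    (hT : T.IsSymm) (h : (T * T).trace = (S * S).trace) : (S * T).trace ≤ (S * S).trace := by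
  have hnonneg := trace_transpose_mul_self_nonneg S
  rw [hS.eq] at hnonneg
  refine le_of_sq_le_sq ?_ hnonneg
  have hcs := trace_transpose_mul_sq_le S T
  rwa [hS.eq, hT.eq, h, ← sq] at hcs

variable [DecidableEq ι]

theorem trace_mul_pow_comm (X Y : Matrix ι ι ℝ) (p : ℕ) :
    ((X * Y) ^ p).trace = ((Y * X) ^ p).trace := by
  cases p with
  | zero => simp
  | succ p => rw [pow_succ', mul_assoc, ← mul_pow_mul, trace_mul_comm, mul_assoc _ Y X, ← pow_succ]

theorem trace_mul_pow_two_mul_le {p : ℕ}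
    (hmul : ∀ X Y : Matrix ι ι ℝ, X.IsSymm → Y.IsSymm → ((X * Y) ^ p).trace ≤ (X ^ p * Y ^ p).trace)
    (hgram : ∀ M : Matrix ι ι ℝ, ((M ^ p)ᵀ * M ^ p).trace ≤ ((Mᵀ * M) ^ p).trace)
    {X Y : Matrix ι ι ℝ} (hX : X.IsSymm) (hY : Y.IsSymm) :
    ((X * Y) ^ (2 * p)).trace ≤ (X ^ (2 * p) * Y ^ (2 * p)).trace := by
  have hgram_eq : (X * Y)ᵀ * (X * Y) = Y * (X ^ 2 * Y) := by
    rw [transpose_mul, hX.eq, hY.eq, sq]; noncomm_ring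
  calc ((X * Y) ^ (2 * p)).trace = ((X * Y) ^ p * (X * Y) ^ p).trace := by rw [two_mul, pow_add]
    _ ≤ (((X * Y) ^ p)ᵀ * (X * Y) ^ p).trace := trace_mul_self_le_trace_transpose_mul_self _
    _ ≤ (((X * Y)ᵀ * (X * Y)) ^ p).trace := hgram _
    _ = ((X ^ 2 * Y ^ 2) ^ p).trace := by rw [hgram_eq, trace_mul_pow_comm, mul_assoc, ← sq]
    _ ≤ ((X ^ 2) ^ p * (Y ^ 2) ^ p).trace := hmul _ _ (hX.pow 2) (hY.pow 2)
    _ = (X ^ (2 * p) * Y ^ (2 * p)).trace := by rw [pow_mul, pow_mul]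

theorem trace_transpose_pow_two_mul_le {p : ℕ}
    (hmul : ∀ X Y : Matrix ι ι ℝ, X.IsSymm → Y.IsSymm → ((X * Y) ^ p).trace ≤ (X ^ p * Y ^ p).trace)
    (hgram : ∀ M : Matrix ι ι ℝ, ((M ^ p)ᵀ * M ^ p).trace ≤ ((Mᵀ * M) ^ p).trace)
    (M : Matrix ι ι ℝ) :
    ((M ^ (2 * p))ᵀ * M ^ (2 * p)).trace ≤ ((Mᵀ * M) ^ (2 * p)).trace := by
  set Q := Mᵀ * M
  set P := M * Mᵀ
  have hQ : Q.IsSymm := by simp [Q, IsSymm, transpose_mul]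
  have hP : P.IsSymm := by simp [P, IsSymm, transpose_mul]
  calc ((M ^ (2 * p))ᵀ * M ^ (2 * p)).trace = (((M ^ 2) ^ p)ᵀ * (M ^ 2) ^ p).trace := by
        rw [pow_mul]
    _ ≤ (((M ^ 2)ᵀ * M ^ 2) ^ p).trace := hgram _
    _ = ((Q * P) ^ p).trace := by
      rw [sq, transpose_mul, show Mᵀ * Mᵀ * (M * M) = Mᵀ * (Mᵀ * M * M) by noncomm_ring,
        trace_mul_pow_comm]
      simp only [Q, P, Matrix.mul_assoc]
    _ ≤ (Q ^ p * P ^ p).trace := hmul Q P hQ hP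
    _ ≤ (Q ^ p * Q ^ p).trace := by
      refine trace_mul_le_of_trace_mul_self_eq (hQ.pow p) (hP.pow p) ?_
      rw [← pow_add, ← pow_add, trace_mul_pow_comm]
    _ = ((Mᵀ * M) ^ (2 * p)).trace := by rw [two_mul, pow_add]

theorem trace_mul_pow_two_pow_le_and_trace_transpose_pow_two_pow_le (k : ℕ) :
    (∀ X Y : Matrix ι ι ℝ, X.IsSymm → Y.IsSymm →
      ((X * Y) ^ 2 ^ k).trace ≤ (X ^ 2 ^ k * Y ^ 2 ^ k).trace) ∧
    (∀ M : Matrix ι ι ℝ, ((M ^ 2 ^ k)ᵀ * M ^ 2 ^ k).trace ≤ ((Mᵀ * M) ^ 2 ^ k).trace) := by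
  induction k with
  | zero => simp
  | succ k ih =>
    rw [pow_succ']
    exact ⟨fun X Y => trace_mul_pow_two_mul_le ih.1 ih.2,
      trace_transpose_pow_two_mul_le ih.1 ih.2⟩

end Matrix

section NormedAlgebra

variable {𝔸 : Type*} [NormedRing 𝔸]

theorem norm_pow_sub_pow_le [NormOneClass 𝔸] {a b : 𝔸} {c : ℝ} (ha : ‖a‖ ≤ c) (hb : ‖b‖ ≤ c)
    (n : ℕ) : ‖a ^ n - b ^ n‖ ≤ n * c ^ (n - 1) * ‖a - b‖ := by
  induction n with
  | zero => simp
  | succ n ih =>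
    have hc : 0 ≤ c := (norm_nonneg a).trans ha
    have hpow : ‖a ^ n‖ ≤ c ^ n := (norm_pow_le a n).trans (pow_le_pow_left₀ (norm_nonneg a) ha n)
    calc ‖a ^ (n + 1) - b ^ (n + 1)‖ = ‖a ^ n * (a - b) + (a ^ n - b ^ n) * b‖ := by
          congr 1; noncomm_ring
      _ ≤ c ^ n * ‖a - b‖ + n * c ^ (n - 1) * ‖a - b‖ * c :=
          (norm_add_le _ _).trans (add_le_add ((norm_mul_le _ _).trans (by gcongr))
            ((norm_mul_le _ _).trans (by gcongr)))
      _ = (n + 1 : ℕ) * c ^ (n + 1 - 1) * ‖a - b‖ := by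
          rw [Nat.add_sub_cancel, Nat.cast_succ]
          rcases n with _ | n
          · simp
          · rw [Nat.add_sub_cancel, pow_succ]; ring

variable [NormedAlgebra ℝ 𝔸] [CompleteSpace 𝔸]

namespace NormedSpace

theorem norm_exp_le_exp_norm [NormOneClass 𝔸] (x : 𝔸) : ‖exp x‖ ≤ Real.exp ‖x‖ := by
  rw [← (exp_series_hasSum_exp' (𝕂 := ℝ) x).tsum_eq]
  refine tsum_of_norm_bounded (Real.exp_eq_exp_ℝ ▸ exp_series_hasSum_exp' (𝕂 := ℝ) ‖x‖) fun k => ?_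
  rw [norm_smul, smul_eq_mul, Real.norm_of_nonneg (by positivity)]
  gcongr
  exact norm_pow_le x k

theorem exp_inv_natCast_smul_pow (x : 𝔸) {m : ℕ} (hm : m ≠ 0) :
    exp ((m : ℝ)⁻¹ • x) ^ m = exp x := by
  let _ : NormedAlgebra ℚ 𝔸 := .restrictScalars ℚ ℝ 𝔸
  rw [← exp_nsmul, ← Nat.cast_smul_eq_nsmul ℝ, smul_smul, mul_inv_cancel₀ (Nat.cast_ne_zero.2 hm),
    one_smul]

theorem isLittleO_exp_smul_mul_exp_smul_sub_exp_smul_add (A B : 𝔸) :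
    (fun t : ℝ => exp (t • A) * exp (t • B) - exp (t • (A + B))) =o[𝓝 0] fun t => t := by
  have hderiv := ((hasDerivAt_exp_smul_const A (0 : ℝ)).mul
    (hasDerivAt_exp_smul_const B (0 : ℝ))).sub (hasDerivAt_exp_smul_const (A + B) (0 : ℝ))
  simp only [zero_smul, exp_zero, one_mul] at hderiv
  simpa using hderiv.isLittleO

theorem norm_exp_mul_exp_pow_sub_exp_add_le [NormOneClass 𝔸] (A B : 𝔸) {m : ℕ} (hm : m ≠ 0) :
    ‖(exp ((m : ℝ)⁻¹ • A) * exp ((m : ℝ)⁻¹ • B)) ^ m - exp (A + B)‖ ≤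
      Real.exp (‖A‖ + ‖B‖) * (m * ‖exp ((m : ℝ)⁻¹ • A) * exp ((m : ℝ)⁻¹ • B) -
        exp ((m : ℝ)⁻¹ • (A + B))‖) := by
  set c := Real.exp ((m : ℝ)⁻¹ * (‖A‖ + ‖B‖))
  have hnorm (x : 𝔸) : ‖(m : ℝ)⁻¹ • x‖ = (m : ℝ)⁻¹ * ‖x‖ := by
    rw [norm_smul, Real.norm_of_nonneg (by positivity)]
  have hprod : ‖exp ((m : ℝ)⁻¹ • A) * exp ((m : ℝ)⁻¹ • B)‖ ≤ c :=
    calc _ ≤ Real.exp ‖(m : ℝ)⁻¹ • A‖ * Real.exp ‖(m : ℝ)⁻¹ • B‖ :=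
          (norm_mul_le _ _).trans (mul_le_mul (norm_exp_le_exp_norm _) (norm_exp_le_exp_norm _)
            (norm_nonneg _) (Real.exp_nonneg _))
      _ = c := by rw [← Real.exp_add, hnorm, hnorm, ← mul_add]
  have hsum : ‖exp ((m : ℝ)⁻¹ • (A + B))‖ ≤ c := by
    refine (norm_exp_le_exp_norm _).trans (Real.exp_le_exp.2 ?_)
    rw [hnorm]
    gcongr
    exact norm_add_le A B
  have hc : c ^ (m - 1) ≤ Real.exp (‖A‖ + ‖B‖) :=
    calc c ^ (m - 1) ≤ c ^ m :=
          pow_le_pow_right₀ (Real.one_le_exp (by positivity)) (Nat.sub_le m 1)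
      _ = Real.exp (‖A‖ + ‖B‖) := by
        rw [← Real.exp_nat_mul, ← mul_assoc, mul_inv_cancel₀ (Nat.cast_ne_zero.2 hm), one_mul]
  rw [← exp_inv_natCast_smul_pow (A + B) hm]
  calc _ ≤ m * c ^ (m - 1) * ‖exp ((m : ℝ)⁻¹ • A) * exp ((m : ℝ)⁻¹ • B) -
        exp ((m : ℝ)⁻¹ • (A + B))‖ := norm_pow_sub_pow_le hprod hsum m
    _ ≤ _ := by rw [mul_right_comm, mul_comm]; gcongr

theorem tendsto_exp_mul_exp_pow [NormOneClass 𝔸] (A B : 𝔸) :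
    Tendsto (fun m : ℕ => (exp ((m : ℝ)⁻¹ • A) * exp ((m : ℝ)⁻¹ • B)) ^ m) atTop
      (𝓝 (exp (A + B))) := by
  have hsmall : Tendsto (fun m : ℕ => (m : ℝ) * ‖exp ((m : ℝ)⁻¹ • A) * exp ((m : ℝ)⁻¹ • B) -
      exp ((m : ℝ)⁻¹ • (A + B))‖) atTop (𝓝 0) := by
    have := (isLittleO_exp_smul_mul_exp_smul_sub_exp_smul_add A B).norm_left.tendsto_div_nhds_zero
    refine (this.comp tendsto_inv_atTop_nhds_zero_nat).congr fun m => ?_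
    simp only [Function.comp_apply, div_inv_eq_mul, mul_comm]
  rw [tendsto_iff_norm_sub_tendsto_zero]
  refine squeeze_zero_norm' ?_
    (by simpa only [mul_zero] using hsmall.const_mul (Real.exp (‖A‖ + ‖B‖)))
  filter_upwards [eventually_ne_atTop 0] with m hm
  rw [norm_norm]
  exact norm_exp_mul_exp_pow_sub_exp_add_le A B hm

end NormedSpace

end NormedAlgebra

/-- Golden–Thompson inequality: for symmetric real matrices `A` and `B`,
`Tr[exp(A + B)] ≤ Tr[exp(A) exp(B)]`. -/
theorem golden_thompson {n : ℕ} (A B : Matrix (Fin n) (Fin n) ℝ)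
    (hA : A.IsHermitian) (hB : B.IsHermitian) :
    (NormedSpace.exp (A + B)).trace ≤ (NormedSpace.exp A * NormedSpace.exp B).trace := by
  -- The `ℓ∞` operator norm satisfies `‖1‖ = 1` only on a nonempty index type, and it induces
  -- the product topology, in which `trace` is continuous.
  rcases isEmpty_or_nonempty (Fin n) with _ | _
  · simp [trace]
  let _ := Matrix.linftyOpNormedRing (n := Fin n) (α := ℝ)
  let _ := Matrix.linftyOpNormedAlgebra (n := Fin n) (R := ℝ) (α := ℝ)
  have hAs : A.IsSymm := hA
  have hBs : B.IsSymm := hB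
  have hlim := (continuous_id.matrix_trace.tendsto _).comp ((tendsto_exp_mul_exp_pow A B).comp
    (tendsto_pow_atTop_atTop_of_one_lt one_lt_two))
  refine le_of_tendsto' hlim fun k => ?_
  have hroot (X : Matrix (Fin n) (Fin n) ℝ) : exp (((2 ^ k : ℕ) : ℝ)⁻¹ • X) ^ 2 ^ k = exp X :=
    exp_inv_natCast_smul_pow X (pow_ne_zero k two_ne_zero)
  have h := (trace_mul_pow_two_pow_le_and_trace_transpose_pow_two_pow_le k).1 _ _
    ((hAs.smul ((2 ^ k : ℕ) : ℝ)⁻¹).exp) ((hBs.smul ((2 ^ k : ℕ) : ℝ)⁻¹).exp)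
  rwa [hroot, hroot] at h
end
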